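/- With (A⟨X⟩, ⋆, Δ, ε) the bialgebra associated to ⋆ ∈ 𝒫 and a_⋆ the alternating-sum map over compositions, a_⋆ is a two-sided antipode: m∘(a_⋆⊗Id)∘Δ = μ∘ε = m∘(Id⊗a_⋆)∘Δ, so (A⟨X⟩, ⋆, Δ, ε, a_⋆) is a Hopf algebra. -/

import Mathlib

open Finsupp Finset Filter

/-- A word `w` seen as an element of the free module `A⟨X⟩` (coefficient 1). -/
noncomputable def delta (A : Type*) [CommRing A] {X : Type*} (w : List X) : List X →₀ A :=
  Finsupp.single w 1

/-- Left concatenation by a letter, as a linear map on `A⟨X⟩`. -/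
noncomputable def lcons (A : Type*) [CommRing A] {X : Type*} (x : X) :
    (List X →₀ A) →ₗ[A] (List X →₀ A) :=
  Finsupp.lmapDomain A A (List.cons x)

/-- Cut a word into the pieces prescribed by a composition (list of block sizes). -/
def splitWord {X : Type*} : List ℕ → List X → List (List X)
  | [], _ => []
  | i :: c, w => w.take i :: splitWord c (w.drop i)

/-- Iterated `⋆`-product of a list of words (empty product = empty word). -/
noncomputable def prodStar {A X : Type*} [CommRing A]
    (star : (List X →₀ A) →ₗ[A] (List X →₀ A) →ₗ[A] (List X →₀ A)) :
    List (List X) → (List X →₀ A)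
  | [] => delta A []
  | u :: l => star (delta A u) (prodStar star l)

/-- The candidate antipode: `a_⋆(x₁…x_n) = Σ_(compositions (i₁,…,i_k) of n) (-1)^k
(x₁…x_(i₁)) ⋆ … ⋆ (x_(i₁+…+i_(k-1)+1)…x_n)`. -/
noncomputable def aStar {A X : Type*} [CommRing A]
    (star : (List X →₀ A) →ₗ[A] (List X →₀ A) →ₗ[A] (List X →₀ A)) (w : List X) :
    List X →₀ A :=
  ∑ c : Composition w.length,
    ((-1 : A) ^ c.blocks.length) • prodStar star (splitWord c.blocks w)

/-!
The recursion for `⋆` on words `a :: u`, `b :: v`, together with the associativity of the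
bracket on letters, makes `⋆` associative (induction on the total length of three words).
Splitting off the first block of a composition gives
`a_⋆(w) = -∑_{w = uv, u ≠ []} u ⋆ a_⋆(v)`, which is the right antipode identity; splitting off
the last block and using associativity gives `a_⋆(w) = -∑_{w = uv, v ≠ []} a_⋆(u) ⋆ v`,
the left one.
-/

namespace Composition

lemma blocks_eq_headI_cons_tail {n : ℕ} (c : Composition (n + 1)) :
    c.blocks = c.blocks.headI :: c.blocks.tail := by
  cases h : c.blocks with
  | nil => simpa [h] using c.blocks_sum
  | cons a l => rfl

def sigmaFirstBlock (n : ℕ) :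
    Composition (n + 1) ≃ Σ i : Fin (n + 1), Composition (n - i) where
  toFun c :=
    have hsum : c.blocks.headI + c.blocks.tail.sum = n + 1 := by
      rw [← List.sum_cons, ← c.blocks_eq_headI_cons_tail, c.blocks_sum]
    have hpos : 0 < c.blocks.headI :=
      c.blocks_pos (c.blocks_eq_headI_cons_tail ▸ List.mem_cons_self)
    ⟨⟨c.blocks.headI - 1, by omega⟩,
      ⟨c.blocks.tail, fun hi => c.blocks_pos (List.mem_of_mem_tail hi), by simp; omega⟩⟩
  invFun p :=
    ⟨(p.1 + 1) :: p.2.blocks, by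
      rintro j hj
      rcases List.mem_cons.1 hj with rfl | hj
      · omega
      · exact p.2.blocks_pos hj, by
      rw [List.sum_cons, p.2.blocks_sum]
      omega⟩
  left_inv c := by
    have hpos : 0 < c.blocks.headI :=
      c.blocks_pos (c.blocks_eq_headI_cons_tail ▸ List.mem_cons_self)
    ext1
    simp only [Nat.sub_add_cancel hpos]
    exact c.blocks_eq_headI_cons_tail.symm
  right_inv p := rfl

theorem sum_succ_eq_sum_first_block {M : Type*} [AddCommMonoid M] (n : ℕ) (f : List ℕ → M) :
    ∑ c : Composition (n + 1), f c.blocks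
      = ∑ i ∈ range (n + 1), ∑ c : Composition (n - i), f ((i + 1) :: c.blocks) := by
  rw [← (sigmaFirstBlock n).symm.sum_comp, Fintype.sum_sigma]
  exact Fin.sum_univ_eq_sum_range (fun i => ∑ c : Composition (n - i), f ((i + 1) :: c.blocks)) _

theorem sum_succ_eq_sum_last_block {M : Type*} [AddCommMonoid M] (n : ℕ) (f : List ℕ → M) :
    ∑ c : Composition (n + 1), f c.blocks
      = ∑ i ∈ range (n + 1), ∑ c : Composition (n - i), f (c.blocks ++ [i + 1]) := by
  rw [← Equiv.sum_comp (reverse_involutive.toPerm _)]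
  simp only [Function.Involutive.coe_toPerm, reverse_blocks]
  rw [sum_succ_eq_sum_first_block n (fun l => f l.reverse)]
  refine sum_congr rfl fun i _ => ?_
  rw [← Equiv.sum_comp (reverse_involutive.toPerm _)]
  simp

end Composition

lemma splitWord_append {X : Type*} (b₁ b₂ : List ℕ) (w : List X) :
    splitWord (b₁ ++ b₂) w = splitWord b₁ w ++ splitWord b₂ (w.drop b₁.sum) := by
  induction b₁ generalizing w with
  | nil => rfl
  | cons i b₁ ih => simp only [List.cons_append, splitWord, ih, List.drop_drop, List.sum_cons]

lemma splitWord_take_sum {X : Type*} (bl : List ℕ) (w : List X) :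
    splitWord bl (w.take bl.sum) = splitWord bl w := by
  induction bl generalizing w with
  | nil => rfl
  | cons i bl ih =>
    simp [splitWord, List.take_take, List.drop_take, ← ih (w.drop i)]

section Antipode

variable {A X : Type*} [CommRing A]
  (star : (List X →₀ A) →ₗ[A] (List X →₀ A) →ₗ[A] (List X →₀ A))
  (brC : X → X → A) (brX : X → X → X)
  (hunitl : ∀ w : List X, star (delta A []) (delta A w) = delta A w)
  (hunitr : ∀ w : List X, star (delta A w) (delta A []) = delta A w)
  (hrec : ∀ (a b : X) (u v : List X),
    star (delta A (a :: u)) (delta A (b :: v)) =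
      lcons A a (star (delta A u) (delta A (b :: v)))
        + lcons A b (star (delta A (a :: u)) (delta A v))
        + brC a b • lcons A (brX a b) (star (delta A u) (delta A v)))
  (hassoc : ∀ a b c : X,
    (brC a b * brC (brX a b) c) • delta A [brX (brX a b) c]
      = (brC b c * brC a (brX b c)) • delta A [brX a (brX b c)])

local infixl:70 " ⋆ " => star
local notation "δ" => delta A

lemma lcons_delta (x : X) (w : List X) : lcons A x (δ w) = δ (x :: w) := by
  simp [lcons, delta]

lemma single_eq_smul_delta (w : List X) (a : A) : Finsupp.single w a = a • δ w := by
  simp [delta]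

lemma smul_lcons_eq_of_smul_delta_eq {c₁ c₂ : A} {x₁ x₂ : X}
    (h : c₁ • δ [x₁] = c₂ • δ [x₂]) (F : List X →₀ A) :
    c₁ • lcons A x₁ F = c₂ • lcons A x₂ F := by
  -- apply the linear map sending the word `[x]` to `lcons A x F`
  simpa [delta] using
    congrArg (Finsupp.linearCombination A fun w : List X => (w.head?.map (lcons A · F)).getD 0) h

include hunitl in
lemma delta_nil_star (f : List X →₀ A) : δ [] ⋆ f = f := by
  refine LinearMap.congr_fun (Finsupp.lhom_ext (φ := star (δ [])) (ψ := LinearMap.id)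
    fun w a => ?_) f
  rw [single_eq_smul_delta, map_smul, hunitl, LinearMap.id_apply]

include hunitr in
lemma star_delta_nil (f : List X →₀ A) : f ⋆ δ [] = f := by
  refine LinearMap.congr_fun (Finsupp.lhom_ext (φ := star.flip (δ [])) (ψ := LinearMap.id)
    fun w a => ?_) f
  rw [single_eq_smul_delta, map_smul, LinearMap.flip_apply, hunitr, LinearMap.id_apply]

include hrec in
lemma lcons_star_delta_cons (x c : X) (t : List X) (f : List X →₀ A) :
    lcons A x f ⋆ δ (c :: t) =
      lcons A x (f ⋆ δ (c :: t)) + lcons A c (lcons A x f ⋆ δ t)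
        + brC x c • lcons A (brX x c) (f ⋆ δ t) := by
  induction f using Finsupp.induction_linear with
  | zero => simp
  | add f g hf hg =>
    simp only [map_add, LinearMap.add_apply, hf, hg, smul_add]
    abel
  | single w a =>
    simp only [single_eq_smul_delta, map_smul, LinearMap.smul_apply, lcons_delta, hrec,
      smul_add, smul_comm a (brC x c)]

include hrec in
lemma delta_cons_star_lcons (a y : X) (u : List X) (g : List X →₀ A) :
    δ (a :: u) ⋆ lcons A y g =
      lcons A a (δ u ⋆ lcons A y g) + lcons A y (δ (a :: u) ⋆ g)
        + brC a y • lcons A (brX a y) (δ u ⋆ g) := by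
  induction g using Finsupp.induction_linear with
  | zero => simp
  | add f g hf hg =>
    simp only [map_add, hf, hg, smul_add]
    abel
  | single w b =>
    simp only [single_eq_smul_delta, map_smul, lcons_delta, hrec, smul_add,
      smul_comm b (brC a y)]

include hrec in
lemma star_star_delta_cons_expand (a b c : X) (u v t : List X) :
    δ (a :: u) ⋆ δ (b :: v) ⋆ δ (c :: t) =
      lcons A a (δ u ⋆ δ (b :: v) ⋆ δ (c :: t))
      + lcons A b (δ (a :: u) ⋆ δ v ⋆ δ (c :: t))
      + brC a b • lcons A (brX a b) (δ u ⋆ δ v ⋆ δ (c :: t))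
      + lcons A c (δ (a :: u) ⋆ δ (b :: v) ⋆ δ t)
      + brC a c • lcons A (brX a c) (δ u ⋆ δ (b :: v) ⋆ δ t)
      + brC b c • lcons A (brX b c) (δ (a :: u) ⋆ δ v ⋆ δ t)
      + (brC a b * brC (brX a b) c) • lcons A (brX (brX a b) c) (δ u ⋆ δ v ⋆ δ t) := by
  have hc : lcons A c (δ (a :: u) ⋆ δ (b :: v) ⋆ δ t) =
      lcons A c (lcons A a (δ u ⋆ δ (b :: v)) ⋆ δ t)
      + lcons A c (lcons A b (δ (a :: u) ⋆ δ v) ⋆ δ t)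
      + brC a b • lcons A c (lcons A (brX a b) (δ u ⋆ δ v) ⋆ δ t) := by
    simp only [hrec a b, map_add, map_smul, LinearMap.add_apply, LinearMap.smul_apply]
  rw [hc]
  conv_lhs => rw [hrec a b]
  simp only [map_add, map_smul, LinearMap.add_apply, LinearMap.smul_apply,
    lcons_star_delta_cons star brC brX hrec, smul_add, smul_smul]
  abel

include hrec in
lemma delta_cons_star_star_expand (a b c : X) (u v t : List X) :
    δ (a :: u) ⋆ (δ (b :: v) ⋆ δ (c :: t)) =
      lcons A a (δ u ⋆ (δ (b :: v) ⋆ δ (c :: t)))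
      + lcons A b (δ (a :: u) ⋆ (δ v ⋆ δ (c :: t)))
      + brC a b • lcons A (brX a b) (δ u ⋆ (δ v ⋆ δ (c :: t)))
      + lcons A c (δ (a :: u) ⋆ (δ (b :: v) ⋆ δ t))
      + brC a c • lcons A (brX a c) (δ u ⋆ (δ (b :: v) ⋆ δ t))
      + brC b c • lcons A (brX b c) (δ (a :: u) ⋆ (δ v ⋆ δ t))
      + (brC b c * brC a (brX b c)) • lcons A (brX a (brX b c)) (δ u ⋆ (δ v ⋆ δ t)) := by
  have ha : lcons A a (δ u ⋆ (δ (b :: v) ⋆ δ (c :: t))) =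
      lcons A a (δ u ⋆ lcons A b (δ v ⋆ δ (c :: t)))
      + lcons A a (δ u ⋆ lcons A c (δ (b :: v) ⋆ δ t))
      + brC b c • lcons A a (δ u ⋆ lcons A (brX b c) (δ v ⋆ δ t)) := by
    simp only [hrec b c, map_add, map_smul]
  rw [ha]
  conv_lhs => rw [hrec b c]
  simp only [map_add, map_smul, delta_cons_star_lcons star brC brX hrec, smul_add, smul_smul]
  abel

include hunitl hunitr hrec hassoc in
theorem delta_star_assoc : ∀ u v t : List X, δ u ⋆ δ v ⋆ δ t = δ u ⋆ (δ v ⋆ δ t)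
  | [], v, t => by simp only [delta_nil_star star hunitl]
  | a :: u, [], t => by simp only [star_delta_nil star hunitr, delta_nil_star star hunitl]
  | a :: u, b :: v, [] => by simp only [star_delta_nil star hunitr]
  | a :: u, b :: v, c :: t => by
    rw [star_star_delta_cons_expand star brC brX hrec,
      delta_cons_star_star_expand star brC brX hrec,
      smul_lcons_eq_of_smul_delta_eq (hassoc a b c), delta_star_assoc u (b :: v) (c :: t),
      delta_star_assoc (a :: u) v (c :: t), delta_star_assoc u v (c :: t),
      delta_star_assoc (a :: u) (b :: v) t, delta_star_assoc u (b :: v) t,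
      delta_star_assoc (a :: u) v t, delta_star_assoc u v t]
termination_by u v t => u.length + v.length + t.length

include hunitl hunitr hrec hassoc in
theorem star_assoc (f g h : List X →₀ A) : f ⋆ g ⋆ h = f ⋆ (g ⋆ h) := by
  induction f using Finsupp.induction_linear with
  | zero => simp
  | add f₁ f₂ h₁ h₂ => simp only [map_add, LinearMap.add_apply, h₁, h₂]
  | single u a =>
    induction g using Finsupp.induction_linear with
    | zero => simp
    | add g₁ g₂ h₁ h₂ => simp only [map_add, LinearMap.add_apply, h₁, h₂]
    | single v b =>
      induction h using Finsupp.induction_linear with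
      | zero => simp
      | add h₁ h₂ e₁ e₂ => simp only [map_add, e₁, e₂]
      | single t c =>
        simp only [single_eq_smul_delta, map_smul, LinearMap.smul_apply,
          delta_star_assoc star brC brX hunitl hunitr hrec hassoc]

include hunitl hunitr hrec hassoc in
lemma prodStar_append (l₁ l₂ : List (List X)) :
    prodStar star (l₁ ++ l₂) = prodStar star l₁ ⋆ prodStar star l₂ := by
  induction l₁ with
  | nil => exact (delta_nil_star star hunitl _).symm
  | cons u l ih =>
    rw [List.cons_append, prodStar, prodStar, ih,
      star_assoc star brC brX hunitl hunitr hrec hassoc]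

lemma aStar_eq_sum_of_length_eq {m : ℕ} {w : List X} (hw : w.length = m) :
    aStar star w =
      ∑ c : Composition m, ((-1 : A) ^ c.blocks.length) • prodStar star (splitWord c.blocks w) := by
  subst hw
  rfl

lemma aStar_nil : aStar star ([] : List X) = δ [] := by
  rw [aStar_eq_sum_of_length_eq star (m := 0) rfl, Fintype.sum_eq_single (Composition.ones 0)
    fun c hc => absurd (Composition.eq_ones_iff_le_length.2 c.length.zero_le) hc]
  simp [splitWord, prodStar]

lemma aStar_cons_eq_neg_sum_first_block (x : X) (w : List X) :
    aStar star (x :: w) =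
      -∑ i ∈ range (w.length + 1),
        δ ((x :: w).take (i + 1)) ⋆ aStar star ((x :: w).drop (i + 1)) := by
  rw [aStar_eq_sum_of_length_eq star (m := w.length + 1) rfl,
    Composition.sum_succ_eq_sum_first_block _
      fun bl => (-1 : A) ^ bl.length • prodStar star (splitWord bl (x :: w)), ← sum_neg_distrib]
  refine sum_congr rfl fun i hi => ?_
  rw [aStar_eq_sum_of_length_eq star (m := w.length - i) (by simp), map_sum, ← sum_neg_distrib]
  refine sum_congr rfl fun c _ => ?_
  simp only [splitWord, prodStar, List.length_cons, pow_succ, mul_neg_one, neg_smul, map_smul]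

include hunitl hunitr hrec hassoc in
lemma aStar_cons_eq_neg_sum_last_block (x : X) (w : List X) :
    aStar star (x :: w) =
      -∑ i ∈ range (w.length + 1), aStar star ((x :: w).take i) ⋆ δ ((x :: w).drop i) := by
  rw [← sum_range_reflect, aStar_eq_sum_of_length_eq star (m := w.length + 1) rfl,
    Composition.sum_succ_eq_sum_last_block _
      fun bl => (-1 : A) ^ bl.length • prodStar star (splitWord bl (x :: w)), ← sum_neg_distrib]
  refine sum_congr rfl fun i hi => ?_
  have hi : i ≤ w.length := Nat.lt_succ_iff.mp (mem_range.mp hi)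
  rw [aStar_eq_sum_of_length_eq star (m := w.length - i) (by simp; omega), map_sum,
    LinearMap.sum_apply, ← sum_neg_distrib]
  refine sum_congr rfl fun c _ => ?_
  have hdrop : ((x :: w).drop (w.length - i)).take (i + 1) = (x :: w).drop (w.length - i) :=
    List.take_of_length_le (by simp; omega)
  rw [splitWord_append, prodStar_append star brC brX hunitl hunitr hrec hassoc, c.blocks_sum,
    ← splitWord_take_sum c.blocks, c.blocks_sum]
  simp only [splitWord, hdrop, prodStar, hunitr, List.length_append, List.length_singleton,
    pow_succ, mul_neg_one, neg_smul, map_smul, LinearMap.smul_apply, add_tsub_cancel_right]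

end Antipode

theorem stmt12 {A X : Type*} [CommRing A]
    (star : (List X →₀ A) →ₗ[A] (List X →₀ A) →ₗ[A] (List X →₀ A))
    (brC : X → X → A) (brX : X → X → X)
    (hunitl : ∀ w : List X, star (delta A []) (delta A w) = delta A w)
    (hunitr : ∀ w : List X, star (delta A w) (delta A []) = delta A w)
    (hrec : ∀ (a b : X) (u v : List X),
      star (delta A (a :: u)) (delta A (b :: v)) =
        lcons A a (star (delta A u) (delta A (b :: v)))
          + lcons A b (star (delta A (a :: u)) (delta A v))
          + brC a b • lcons A (brX a b) (star (delta A u) (delta A v)))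
    (hassoc : ∀ a b c : X,
      (brC a b * brC (brX a b) c) • delta A [brX (brX a b) c]
        = (brC b c * brC a (brX b c)) • delta A [brX a (brX b c)]) :
    ∀ w : List X,
      ((∑ i ∈ Finset.range (w.length + 1),
          star (aStar star (w.take i)) (delta A (w.drop i)))
        = (match w with | [] => delta A ([] : List X) | _ => 0)) ∧
      ((∑ i ∈ Finset.range (w.length + 1),
          star (delta A (w.take i)) (aStar star (w.drop i)))
        = (match w with | [] => delta A ([] : List X) | _ => 0)) := by
  rintro (_ | ⟨x, w⟩)
  · simp only [List.length_nil, zero_add, sum_range_one, List.take_nil, List.drop_nil,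
      aStar_nil, hunitl, and_self]
  constructor
  · rw [sum_range_succ, List.take_length, List.drop_length, star_delta_nil star hunitr,
      aStar_cons_eq_neg_sum_last_block star brC brX hunitl hunitr hrec hassoc, List.length_cons,
      add_neg_cancel]
  · rw [sum_range_succ', List.take_zero, List.drop_zero, delta_nil_star star hunitl,
      aStar_cons_eq_neg_sum_first_block, List.length_cons, add_neg_cancel]
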